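/- In the setting of the previous statement, the root B₂ = −Var(γ_med'W₁)/Cov(X, γ_med'W₁) satisfies Var( (γ_med + B₂·π₁)'W₁ ) = 0, i.e., γ_med + B₂·π₁ = 0 when Var(W₁) is positive definite. Hence β_med − B₂ lies in the degenerate set {b : γ_med + (β_med − b)π₁ = 0}, and the unique non-degenerate solution of the δ = 1 equation is β_long = β_med − B₁ = β_med + (β_med − β_short)·(R²_long − R²_med)/(R²_med − R²_short). -/

import Mathlib

open scoped RealInnerProductSpace

/-- Gram (covariance) matrix of a finite family of demeaned square-integrable
random variables, modeled as vectors in a real inner product space where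
`⟪A, B⟫` is `Cov(A, B)`. -/
noncomputable def gram {V : Type*} [NormedAddCommGroup V] [InnerProductSpace ℝ V]
    {ι : Type*} [Fintype ι] (f : ι → V) : Matrix ι ι ℝ :=
  Matrix.of fun i j => ⟪f i, f j⟫

/-- `π₁ = Var(W₁)⁻¹ Cov(W₁, X)`: coefficient vector of the linear projection of
`X` on `W₁`. -/
noncomputable def pi1 {V : Type*} [NormedAddCommGroup V] [InnerProductSpace ℝ V]
    {d : ℕ} (W₁ : Fin d → V) (X : V) : Fin d → ℝ :=
  (gram W₁)⁻¹.mulVec fun i => ⟪W₁ i, X⟫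

/-- `X^{⊥W₁} = X − π₁'W₁`. -/
noncomputable def perpW1 {V : Type*} [NormedAddCommGroup V] [InnerProductSpace ℝ V]
    {d : ℕ} (W₁ : Fin d → V) (X : V) : V :=
  X - ∑ i, pi1 W₁ X i • W₁ i


/-- `f₀(B)` as in Oster's cubic. -/
noncomputable def f0 (vXp vGam cXg vPi B : ℝ) : ℝ :=
  -B * vXp * (vGam + 2 * B * cXg + B ^ 2 * vPi)

/-- `f₁(B, R²_long)` as in Oster's cubic. -/
noncomputable def f1 (R2l R2m vY cXg vPi vXp B : ℝ) : ℝ :=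
  (R2l - R2m) * vY * cXg + B * (R2l - R2m) * vY * vPi
    + B ^ 2 * vXp * cXg + B ^ 3 * vXp * vPi

/-!
Proportionality makes `γ_med'W₁ = C · π₁'W₁`, so `Cov(X, γ_med'W₁) = C · Var(π₁'W₁)` and
`Var(γ_med'W₁) = C² · Var(π₁'W₁)` (the residual `X^{⊥W₁}` is orthogonal to every `W₁ i`). Hence
`B₂ = -C` and `γ_med + B₂ π₁ = 0`. The cubic then factors as
`Var(π₁'W₁) · (C + B) · ((R²_long - R²_med) Var(Y) - B C Var(X^{⊥W₁}))`; the factor `C + B` vanishes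
exactly at the degenerate root, so a non-degenerate `B` is the root of the linear factor. Since
`(β_short - β_med) Var(X) = Cov(X, γ_med'W₁)` and
`(R²_med - R²_short) Var(Y) Var(X) = C · Cov(X, γ_med'W₁) · Var(X^{⊥W₁})`, that root is
`B = (β_short - β_med)(R²_long - R²_med)/(R²_med - R²_short)`.
-/

section Projection

variable {V : Type*} [NormedAddCommGroup V] [InnerProductSpace ℝ V] {d : ℕ}
  {W₁ : Fin d → V} (X : V)

theorem gram_mulVec_pi1 (hW : IsUnit (gram W₁).det) :
    (gram W₁).mulVec (pi1 W₁ X) = fun i => ⟪W₁ i, X⟫ := by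
  rw [pi1, Matrix.mulVec_mulVec, Matrix.mul_nonsing_inv _ hW, Matrix.one_mulVec]

theorem inner_perpW1_right (hW : IsUnit (gram W₁).det) (i : Fin d) :
    ⟪W₁ i, perpW1 W₁ X⟫ = 0 := by
  have normal_eq := congrFun (gram_mulVec_pi1 X hW) i
  simp only [Matrix.mulVec, dotProduct, gram, Matrix.of_apply] at normal_eq
  simp only [perpW1, inner_sub_right, inner_sum, real_inner_smul_right, ← normal_eq, mul_comm,
    sub_self]

theorem inner_perpW1_sum_smul (hW : IsUnit (gram W₁).det) (c : Fin d → ℝ) :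
    ⟪perpW1 W₁ X, ∑ i, c i • W₁ i⟫ = 0 := by
  simp [inner_sum, real_inner_smul_right, real_inner_comm, inner_perpW1_right X hW]

theorem inner_sum_pi1_smul (hW : IsUnit (gram W₁).det) :
    ⟪X, ∑ i, pi1 W₁ X i • W₁ i⟫ = ⟪∑ i, pi1 W₁ X i • W₁ i, ∑ i, pi1 W₁ X i • W₁ i⟫ := by
  have h := inner_perpW1_sum_smul X hW (pi1 W₁ X)
  rwa [perpW1, inner_sub_left, sub_eq_zero] at h

theorem inner_perpW1_self (hW : IsUnit (gram W₁).det) :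
    ⟪perpW1 W₁ X, perpW1 W₁ X⟫ = ⟪X, X⟫ - ⟪∑ i, pi1 W₁ X i • W₁ i, ∑ i, pi1 W₁ X i • W₁ i⟫ := by
  rw [perpW1, real_inner_sub_sub_self, inner_sum_pi1_smul X hW]
  ring

theorem sum_smul_pi1_smul_eq (C : ℝ) :
    ∑ i, (C • pi1 W₁ X) i • W₁ i = C • ∑ i, pi1 W₁ X i • W₁ i := by
  simp only [Finset.smul_sum, Pi.smul_apply, smul_eq_mul, mul_smul]

theorem inner_sum_smul_pi1_smul_right (hW : IsUnit (gram W₁).det) (C : ℝ) :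
    ⟪X, ∑ i, (C • pi1 W₁ X) i • W₁ i⟫
      = C * ⟪∑ i, pi1 W₁ X i • W₁ i, ∑ i, pi1 W₁ X i • W₁ i⟫ := by
  rw [sum_smul_pi1_smul_eq, real_inner_smul_right, inner_sum_pi1_smul X hW]

theorem inner_self_sum_smul_pi1_smul (C : ℝ) :
    ⟪∑ i, (C • pi1 W₁ X) i • W₁ i, ∑ i, (C • pi1 W₁ X) i • W₁ i⟫
      = C ^ 2 * ⟪∑ i, pi1 W₁ X i • W₁ i, ∑ i, pi1 W₁ X i • W₁ i⟫ := by
  rw [sum_smul_pi1_smul_eq, real_inner_smul_left, real_inner_smul_right]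
  ring

end Projection

theorem f0_add_f1_proportional (vXp vP vY C R2l R2m B : ℝ) :
    f0 vXp (C ^ 2 * vP) (C * vP) vP B + f1 R2l R2m vY (C * vP) vP vXp B
      = vP * (C + B) * ((R2l - R2m) * vY - B * C * vXp) := by
  unfold f0 f1
  ring

theorem sub_eq_of_R2_gap {vX vY vXp g C βmed βs R2l R2m R2s B : ℝ}
    (hvX : vX ≠ 0) (hvY : vY ≠ 0) (hvXp : vXp ≠ 0) (hg : g ≠ 0) (hC : C ≠ 0)
    (hβs : (βs - βmed) * vX = g) (hgap : (R2m - R2s) * vY * vX = C * g * vXp)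
    (hroot : (R2l - R2m) * vY = B * C * vXp) :
    βmed - B = βmed + (βmed - βs) * (R2l - R2m) / (R2m - R2s) := by
  have hβ : βmed - βs = -g / vX := by field_simp; linarith
  have hR2m : R2m - R2s = C * g * vXp / (vY * vX) := by field_simp; linarith
  have hR2l : R2l - R2m = B * C * vXp / vY := by field_simp; linarith
  rw [hβ, hR2m, hR2l]
  field_simp
  ring

theorem oster_prop1_sharp_general
    {V : Type*} [NormedAddCommGroup V] [InnerProductSpace ℝ V] {d : ℕ}
    (Y X : V) (W₁ : Fin d → V)
    (hpdW1 : (gram W₁).PosDef)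
    (hvXp : 0 < ⟪perpW1 W₁ X, perpW1 W₁ X⟫)
    (hvarX : 0 < ⟪X, X⟫) (hvarY : 0 < ⟪Y, Y⟫)
    (βmed : ℝ) (γmed : Fin d → ℝ) (Vres : V)
    (hmed : Y = βmed • X + (∑ i, γmed i • W₁ i) + Vres)
    (hVX : ⟪Vres, X⟫ = 0)
    (hshort : ⟪Y, X⟫ / ⟪X, X⟫ ≠ βmed)
    (Cmed : ℝ) (hprop : γmed = Cmed • pi1 W₁ X)
    (R2l : ℝ) :
    (γmed + (-⟪∑ i, γmed i • W₁ i, ∑ i, γmed i • W₁ i⟫ / ⟪X, ∑ i, γmed i • W₁ i⟫)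
        • pi1 W₁ X = 0)
    ∧ ⟪∑ i, (γmed i + (-⟪∑ i, γmed i • W₁ i, ∑ i, γmed i • W₁ i⟫
          / ⟪X, ∑ i, γmed i • W₁ i⟫) * pi1 W₁ X i) • W₁ i,
        ∑ i, (γmed i + (-⟪∑ i, γmed i • W₁ i, ∑ i, γmed i • W₁ i⟫
          / ⟪X, ∑ i, γmed i • W₁ i⟫) * pi1 W₁ X i) • W₁ i⟫ = 0
    ∧ ∀ b : ℝ,
        (f0 ⟪perpW1 W₁ X, perpW1 W₁ X⟫
            ⟪∑ i, γmed i • W₁ i, ∑ i, γmed i • W₁ i⟫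
            ⟪X, ∑ i, γmed i • W₁ i⟫
            ⟪∑ i, pi1 W₁ X i • W₁ i, ∑ i, pi1 W₁ X i • W₁ i⟫ (βmed - b)
          + f1 R2l
            (⟪βmed • X + ∑ i, γmed i • W₁ i, βmed • X + ∑ i, γmed i • W₁ i⟫ / ⟪Y, Y⟫)
            ⟪Y, Y⟫
            ⟪X, ∑ i, γmed i • W₁ i⟫
            ⟪∑ i, pi1 W₁ X i • W₁ i, ∑ i, pi1 W₁ X i • W₁ i⟫
            ⟪perpW1 W₁ X, perpW1 W₁ X⟫ (βmed - b) = 0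
          ∧ γmed + (βmed - b) • pi1 W₁ X ≠ 0) →
        b = βmed + (βmed - ⟪Y, X⟫ / ⟪X, X⟫)
          * (R2l - ⟪βmed • X + ∑ i, γmed i • W₁ i,
              βmed • X + ∑ i, γmed i • W₁ i⟫ / ⟪Y, Y⟫)
          / (⟪βmed • X + ∑ i, γmed i • W₁ i, βmed • X + ∑ i, γmed i • W₁ i⟫ / ⟪Y, Y⟫
            - ⟪(⟪Y, X⟫ / ⟪X, X⟫) • X, (⟪Y, X⟫ / ⟪X, X⟫) • X⟫ / ⟪Y, Y⟫) := by
  subst hprop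
  have hW : IsUnit (gram W₁).det := isUnit_iff_ne_zero.mpr hpdW1.det_pos.ne'
  have hcov := inner_sum_smul_pi1_smul_right X hW Cmed
  have hvar := inner_self_sum_smul_pi1_smul X (W₁ := W₁) Cmed
  have hperp := inner_perpW1_self X hW
  set vP := ⟪∑ i, pi1 W₁ X i • W₁ i, ∑ i, pi1 W₁ X i • W₁ i⟫
  have hYX : ⟪Y, X⟫ = βmed * ⟪X, X⟫ + Cmed * vP := by
    rw [hmed, inner_add_left, inner_add_left, real_inner_smul_left, hVX, add_zero, ← hcov,
      real_inner_comm X (∑ i, _)]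
  have hβs : (⟪Y, X⟫ / ⟪X, X⟫ - βmed) * ⟪X, X⟫ = Cmed * vP := by
    field_simp; linarith
  have hcov_ne : Cmed * vP ≠ 0 := fun h =>
    hshort (sub_eq_zero.mp ((mul_eq_zero.mp (hβs.trans h)).resolve_right hvarX.ne'))
  obtain ⟨hC, hvP⟩ := mul_ne_zero_iff.mp hcov_ne
  have hB₂ : -(Cmed ^ 2 * vP) / (Cmed * vP) = -Cmed := by field_simp
  have hdegenerate : Cmed • pi1 W₁ X + (-Cmed) • pi1 W₁ X = 0 := by
    rw [← add_smul, add_neg_cancel, zero_smul]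
  rw [hvar, hcov, hB₂]
  refine ⟨hdegenerate, ?_, ?_⟩
  · have hcoeff (i : Fin d) : (Cmed • pi1 W₁ X) i + -Cmed * pi1 W₁ X i = 0 :=
      congrFun hdegenerate i
    simp only [hcoeff, zero_smul, Finset.sum_const_zero, inner_zero_left]
  · rintro b ⟨hroot, hnondeg⟩
    have hCB : Cmed + (βmed - b) ≠ 0 := fun h => hnondeg (by rw [← add_smul, h, zero_smul])
    rw [f0_add_f1_proportional] at hroot
    have hlinear := (mul_eq_zero.mp hroot).resolve_left (mul_ne_zero hvP hCB)
    calc b = βmed - (βmed - b) := by ring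
      _ = _ := by
        refine sub_eq_of_R2_gap hvarX.ne' hvarY.ne' hvXp.ne' hcov_ne hC hβs ?_
          (sub_eq_zero.mp hlinear)
        simp only [hperp, real_inner_add_add_self, real_inner_smul_left, real_inner_smul_right,
          hYX, hvar, hcov]
        field_simp
        ring

/-- Oster's Proposition 1 with sharpness: under proportional coefficients,
the root `B₂ = −Var(γ_med'W₁)/Cov(X,γ_med'W₁)` of the `δ = 1` equation is
degenerate (`γ_med + B₂·π₁ = 0`), and the unique non-degenerate solution is
`β_long = β_med + (β_med − β_short)·(R²_long − R²_med)/(R²_med − R²_short)`. -/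
theorem oster_prop1_sharp
    {V : Type*} [NormedAddCommGroup V] [InnerProductSpace ℝ V] {d : ℕ}
    (Y X : V) (W₁ : Fin d → V)
    (hpdW1 : (gram W₁).PosDef)
    (hvXp : 0 < ⟪perpW1 W₁ X, perpW1 W₁ X⟫)
    (hvarX : 0 < ⟪X, X⟫) (hvarY : 0 < ⟪Y, Y⟫)
    (βmed : ℝ) (γmed : Fin d → ℝ) (Vres : V)
    (hmed : Y = βmed • X + (∑ i, γmed i • W₁ i) + Vres)
    (hVX : ⟪Vres, X⟫ = 0) (hVW1 : ∀ i, ⟪Vres, W₁ i⟫ = 0)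
    (hshort : ⟪Y, X⟫ / ⟪X, X⟫ ≠ βmed)
    (Cmed : ℝ) (hprop : γmed = Cmed • pi1 W₁ X)
    (R2l : ℝ)
    (hR2l : R2l ∈ Set.Ioc
      (⟪βmed • X + ∑ i, γmed i • W₁ i, βmed • X + ∑ i, γmed i • W₁ i⟫ / ⟪Y, Y⟫) 1) :
    (γmed + (-⟪∑ i, γmed i • W₁ i, ∑ i, γmed i • W₁ i⟫ / ⟪X, ∑ i, γmed i • W₁ i⟫)
        • pi1 W₁ X = 0)
    ∧ ⟪∑ i, (γmed i + (-⟪∑ i, γmed i • W₁ i, ∑ i, γmed i • W₁ i⟫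
          / ⟪X, ∑ i, γmed i • W₁ i⟫) * pi1 W₁ X i) • W₁ i,
        ∑ i, (γmed i + (-⟪∑ i, γmed i • W₁ i, ∑ i, γmed i • W₁ i⟫
          / ⟪X, ∑ i, γmed i • W₁ i⟫) * pi1 W₁ X i) • W₁ i⟫ = 0
    ∧ ∀ b : ℝ,
        (f0 ⟪perpW1 W₁ X, perpW1 W₁ X⟫
            ⟪∑ i, γmed i • W₁ i, ∑ i, γmed i • W₁ i⟫
            ⟪X, ∑ i, γmed i • W₁ i⟫
            ⟪∑ i, pi1 W₁ X i • W₁ i, ∑ i, pi1 W₁ X i • W₁ i⟫ (βmed - b)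
          + f1 R2l
            (⟪βmed • X + ∑ i, γmed i • W₁ i, βmed • X + ∑ i, γmed i • W₁ i⟫ / ⟪Y, Y⟫)
            ⟪Y, Y⟫
            ⟪X, ∑ i, γmed i • W₁ i⟫
            ⟪∑ i, pi1 W₁ X i • W₁ i, ∑ i, pi1 W₁ X i • W₁ i⟫
            ⟪perpW1 W₁ X, perpW1 W₁ X⟫ (βmed - b) = 0
          ∧ γmed + (βmed - b) • pi1 W₁ X ≠ 0) →
        b = βmed + (βmed - ⟪Y, X⟫ / ⟪X, X⟫)
          * (R2l - ⟪βmed • X + ∑ i, γmed i • W₁ i,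
              βmed • X + ∑ i, γmed i • W₁ i⟫ / ⟪Y, Y⟫)
          / (⟪βmed • X + ∑ i, γmed i • W₁ i, βmed • X + ∑ i, γmed i • W₁ i⟫ / ⟪Y, Y⟫
            - ⟪(⟪Y, X⟫ / ⟪X, X⟫) • X, (⟪Y, X⟫ / ⟪X, X⟫) • X⟫ / ⟪Y, Y⟫) :=
  oster_prop1_sharp_general Y X W₁ hpdW1 hvXp hvarX hvarY βmed γmed Vres hmed hVX hshort Cmed hprop
    R2l
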